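/- arXiv:1501.05744 — 3 statements merged into one kernel-verified Lean document; each statement's English description precedes it below -/
import Mathlib

section
/- Theorem 3, (2) ⇒ (3): let μ* ∈ P and Π* ∈ 𝓜ᵐᵐ, and suppose f k (Π*) ≥ F*(μ*) for every k ∈ Fin K. Then F*(μ*) = F(μ*, Π*), and f k (Π*) ≥ f k' (Π*) for all k, k' ∈ Fin K such that μ* k' > 0. -/
/-! Averaging the hypotheses `F⋆(μ⋆) ≤ f k (Π⋆)` with the weights `μ⋆` gives
`F⋆(μ⋆) ≤ F(μ⋆, Π⋆)`, and feasibility of `Π⋆` gives the reverse inequality. The latter needs the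
supremum to be a genuine one (`sSup` of a set unbounded above is `0`): the payoff is bounded on
POVMs because every entry of a POVM element has modulus at most `1`, by its `2 × 2` principal
minors and `0 ≤ Π m ≤ 1`. Once `F⋆(μ⋆) = F(μ⋆, Π⋆)`, the `μ⋆`-average of the nonnegative gaps
`f k (Π⋆) - F⋆(μ⋆)` vanishes, so `f k' (Π⋆) = F⋆(μ⋆)` whenever `μ⋆ k' > 0`. -/

open Matrix Complex
open scoped ComplexOrder

noncomputable section

/-- A POVM with `M` outcomes: each detection operator is positive semidefinite
and they sum to the identity. -/
def IsPOVM {n : Type*} [Fintype n] [DecidableEq n] {M : ℕ}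
    (P : Fin M → Matrix n n ℂ) : Prop :=
  (∀ m, (P m).PosSemidef) ∧ ∑ m, P m = 1

/-- Membership in the feasible set `𝓜ᵐᵐ`. -/
def Feasible {n : Type*} [Fintype n] [DecidableEq n] {M J : ℕ}
    (a : Fin J → Fin M → Matrix n n ℂ) (b : Fin J → ℝ)
    (P : Fin M → Matrix n n ℂ) : Prop :=
  IsPOVM P ∧ ∀ j, ∑ m, ((a j m * P m).trace).re ≤ b j

/-- The primal objective `f(Π)`. -/
def primalObj {n : Type*} [Fintype n] {M : ℕ}
    (c : Fin M → Matrix n n ℂ) (P : Fin M → Matrix n n ℂ) : ℝ :=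
  ∑ m, ((c m * P m).trace).re

/-- The operator `z m λ = c m - ∑ j, λ j • a j m`. -/
def zOp {M J : ℕ} {n : Type*}
    (c : Fin M → Matrix n n ℂ) (a : Fin J → Fin M → Matrix n n ℂ)
    (lam : Fin J → ℝ) (m : Fin M) : Matrix n n ℂ :=
  c m - ∑ j, (lam j : ℂ) • a j m

/-- The dual objective `s(X, λ)`. -/
def dualObj {n : Type*} [Fintype n] {J : ℕ}
    (b : Fin J → ℝ) (X : Matrix n n ℂ) (lam : Fin J → ℝ) : ℝ :=
  X.trace.re + ∑ j, lam j * b j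


/-- The probability simplex `P` over `Fin K`. -/
def Simplex {K : ℕ} (μ : Fin K → ℝ) : Prop :=
  (∀ k, 0 ≤ μ k) ∧ ∑ k, μ k = 1

/-- The functions `f k (Π) = ∑ m, Re(Tr(c k m * Π m)) + d k`. -/
def fObj {n : Type*} [Fintype n] {M K : ℕ}
    (c : Fin K → Fin M → Matrix n n ℂ) (d : Fin K → ℝ)
    (k : Fin K) (P : Fin M → Matrix n n ℂ) : ℝ :=
  ∑ m, ((c k m * P m).trace).re + d k

/-- The payoff function `F(μ, Π) = ∑ k, μ k * f k (Π)`. -/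
def FObj {n : Type*} [Fintype n] {M K : ℕ}
    (c : Fin K → Fin M → Matrix n n ℂ) (d : Fin K → ℝ)
    (μ : Fin K → ℝ) (P : Fin M → Matrix n n ℂ) : ℝ :=
  ∑ k, μ k * fObj c d k P

/-- `F⋆(μ)`: the supremum of `F(μ, Π)` over feasible `Π`. -/
def Fstar {n : Type*} [Fintype n] [DecidableEq n] {M J K : ℕ}
    (a : Fin J → Fin M → Matrix n n ℂ) (b : Fin J → ℝ)
    (c : Fin K → Fin M → Matrix n n ℂ) (d : Fin K → ℝ)
    (μ : Fin K → ℝ) : ℝ :=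
  sSup ((fun P => FObj c d μ P) '' {P | Feasible a b P})

/-- A minimax solution (saddle point of `F`). -/
def IsMinimaxSol {n : Type*} [Fintype n] [DecidableEq n] {M J K : ℕ}
    (a : Fin J → Fin M → Matrix n n ℂ) (b : Fin J → ℝ)
    (c : Fin K → Fin M → Matrix n n ℂ) (d : Fin K → ℝ)
    (μs : Fin K → ℝ) (Ps : Fin M → Matrix n n ℂ) : Prop :=
  Simplex μs ∧ Feasible a b Ps ∧
    (∀ P, Feasible a b P → FObj c d μs P ≤ FObj c d μs Ps) ∧
    (∀ μ, Simplex μ → FObj c d μs Ps ≤ FObj c d μ Ps)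

namespace Matrix.PosSemidef

variable {n : Type*} {P : Matrix n n ℂ}

theorem re_apply_self_nonneg (hP : P.PosSemidef) (i : n) : 0 ≤ (P i i).re :=
  (Complex.nonneg_iff.mp hP.diag_nonneg).1

theorem im_apply_self (hP : P.PosSemidef) (i : n) : (P i i).im = 0 :=
  (Complex.nonneg_iff.mp hP.diag_nonneg).2.symm

theorem norm_apply_sq_le (hP : P.PosSemidef) (i j : n) :
    ‖P i j‖ ^ 2 ≤ (P i i).re * (P j j).re := by
  have hdet := (hP.submatrix ![i, j]).det_nonneg
  have hji : P j i = star (P i j) := (hP.isHermitian.apply j i).symm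
  simp only [det_fin_two, submatrix_apply, Matrix.cons_val_zero, Matrix.cons_val_one, hji,
    RCLike.star_def, mul_conj, sub_nonneg] at hdet
  have hre := (Complex.le_def.mp hdet).1
  simp only [ofReal_re, mul_re, hP.im_apply_self, mul_zero, sub_zero] at hre
  rwa [Complex.sq_norm]

end Matrix.PosSemidef

namespace IsPOVM

variable {n : Type*} [Fintype n] [DecidableEq n] {M : ℕ} {P : Fin M → Matrix n n ℂ}

theorem re_apply_self_le_one (hP : IsPOVM P) (m : Fin M) (i : n) : (P m i i).re ≤ 1 := by
  have hsum : ∑ m', (P m' i i).re = 1 := by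
    simpa [Matrix.sum_apply] using congrArg (fun A => (A i i).re) hP.2
  rw [← hsum]
  exact Finset.single_le_sum (fun m' _ => (hP.1 m').re_apply_self_nonneg i) (Finset.mem_univ m)

theorem norm_apply_le_one (hP : IsPOVM P) (m : Fin M) (i j : n) : ‖P m i j‖ ≤ 1 := by
  have hsq := (hP.1 m).norm_apply_sq_le i j
  have hprod : (P m i i).re * (P m j j).re ≤ 1 :=
    mul_le_one₀ (hP.re_apply_self_le_one m i) ((hP.1 m).re_apply_self_nonneg j)
      (hP.re_apply_self_le_one m j)
  exact (sq_le_one_iff₀ (norm_nonneg _)).mp (hsq.trans hprod)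

end IsPOVM

theorem re_trace_mul_le_sum_norm {n : Type*} [Fintype n] (C P : Matrix n n ℂ)
    (hP : ∀ i j, ‖P i j‖ ≤ 1) : ((C * P).trace).re ≤ ∑ i, ∑ j, ‖C i j‖ := by
  have htrace : (C * P).trace = ∑ i, ∑ j, C i j * P j i := by
    simp [Matrix.trace, Matrix.mul_apply]
  calc ((C * P).trace).re ≤ ‖(C * P).trace‖ := Complex.re_le_norm _
    _ ≤ ∑ i, ∑ j, ‖C i j * P j i‖ := by
        rw [htrace]
        exact (norm_sum_le _ _).trans (Finset.sum_le_sum fun i _ => norm_sum_le _ _)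
    _ ≤ ∑ i, ∑ j, ‖C i j‖ := by
        gcongr with i _ j _
        rw [norm_mul]
        exact mul_le_of_le_one_right (norm_nonneg _) (hP j i)

section Payoff

variable {n : Type*} [Fintype n] [DecidableEq n] {M J K : ℕ}
  {a : Fin J → Fin M → Matrix n n ℂ} {b : Fin J → ℝ}
  {c : Fin K → Fin M → Matrix n n ℂ} {d : Fin K → ℝ}

theorem fObj_le_of_isPOVM {P : Fin M → Matrix n n ℂ} (hP : IsPOVM P) (k : Fin K) :
    fObj c d k P ≤ ∑ m, ∑ i, ∑ j, ‖c k m i j‖ + d k := by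
  unfold fObj
  gcongr with m
  exact re_trace_mul_le_sum_norm _ _ (hP.norm_apply_le_one m)

theorem bddAbove_FObj_image {μ : Fin K → ℝ} (hμ : ∀ k, 0 ≤ μ k) :
    BddAbove ((fun P => FObj c d μ P) '' {P | Feasible a b P}) := by
  refine ⟨∑ k, μ k * (∑ m, ∑ i, ∑ j, ‖c k m i j‖ + d k), ?_⟩
  rintro _ ⟨P, hP, rfl⟩
  exact Finset.sum_le_sum fun k _ =>
    mul_le_mul_of_nonneg_left (fObj_le_of_isPOVM hP.1 k) (hμ k)

theorem FObj_le_Fstar {μ : Fin K → ℝ} (hμ : ∀ k, 0 ≤ μ k) {P : Fin M → Matrix n n ℂ}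
    (hP : Feasible a b P) : FObj c d μ P ≤ Fstar a b c d μ :=
  le_csSup (bddAbove_FObj_image hμ) ⟨P, hP, rfl⟩

end Payoff

namespace Simplex

variable {K : ℕ} {μ x : Fin K → ℝ} {s : ℝ}

theorem le_sum_mul (hμ : Simplex μ) (hx : ∀ k, s ≤ x k) : s ≤ ∑ k, μ k * x k :=
  calc s = ∑ k, μ k * s := by rw [← Finset.sum_mul, hμ.2, one_mul]
    _ ≤ ∑ k, μ k * x k := by gcongr with k; exacts [hμ.1 k, hx k]

theorem eq_of_sum_mul_eq (hμ : Simplex μ) (hx : ∀ k, s ≤ x k) (hsum : ∑ k, μ k * x k = s)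
    {k : Fin K} (hk : 0 < μ k) : x k = s := by
  have hzero : ∑ k, μ k * (x k - s) = 0 := by
    simp only [mul_sub, Finset.sum_sub_distrib, ← Finset.sum_mul, hμ.2, one_mul, hsum, sub_self]
  have hterm := (Finset.sum_eq_zero_iff_of_nonneg fun k _ =>
    mul_nonneg (hμ.1 k) (sub_nonneg.mpr (hx k))).mp hzero k (Finset.mem_univ k)
  linarith [(mul_eq_zero.mp hterm).resolve_left hk.ne']

end Simplex

theorem fk_ge_implies_eq_and_mono_general
    {n : Type*} [Fintype n] [DecidableEq n]
    {M J K : ℕ}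
    (a : Fin J → Fin M → Matrix n n ℂ) (b : Fin J → ℝ)
    (c : Fin K → Fin M → Matrix n n ℂ) (d : Fin K → ℝ)
    (μs : Fin K → ℝ) (Ps : Fin M → Matrix n n ℂ)
    (hμ : Simplex μs) (hP : Feasible a b Ps)
    (h : ∀ k, Fstar a b c d μs ≤ fObj c d k Ps) :
    Fstar a b c d μs = FObj c d μs Ps ∧
      ∀ k k', 0 < μs k' → fObj c d k' Ps ≤ fObj c d k Ps := by
  have heq : Fstar a b c d μs = FObj c d μs Ps :=
    le_antisymm (hμ.le_sum_mul h) (FObj_le_Fstar hμ.1 hP)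
  refine ⟨heq, fun k k' hk' => ?_⟩
  rw [hμ.eq_of_sum_mul_eq h heq.symm hk']
  exact h k

/-- Theorem 3, (2) ⇒ (3). -/
theorem fk_ge_implies_eq_and_mono
    {n : Type*} [Fintype n] [DecidableEq n] [Nonempty n]
    {M J K : ℕ}
    (a : Fin J → Fin M → Matrix n n ℂ) (b : Fin J → ℝ)
    (c : Fin K → Fin M → Matrix n n ℂ) (d : Fin K → ℝ)
    (ha : ∀ j m, (a j m).IsHermitian) (hc : ∀ k m, (c k m).IsHermitian)
    (μs : Fin K → ℝ) (Ps : Fin M → Matrix n n ℂ)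
    (hμ : Simplex μs) (hP : Feasible a b Ps)
    (h : ∀ k, Fstar a b c d μs ≤ fObj c d k Ps) :
    Fstar a b c d μs = FObj c d μs Ps ∧
      ∀ k k', 0 < μs k' → fObj c d k' Ps ≤ fObj c d k Ps :=
  fk_ge_implies_eq_and_mono_general a b c d μs Ps hμ hP h
end
end

section
/- Theorem 5, first part: under the covariance assumptions on both constraints and objective, for every Φ ∈ 𝓜ᵐᵐ there exists Π ∈ 𝓜ᵐᵐ such that f(Π) = f(Φ) and Π is G-covariant, i.e. (U g) * Π m * (U g)† = Π (g • m) for all g ∈ G and m ∈ Fin M. -/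
open Matrix Complex
open scoped ComplexOrder

noncomputable section

/-- The action `g · A = (U g) * A * (U g)†` of a group on matrices induced by a
unitary representation `U`. -/
def conjAct {n : Type*} [Fintype n] [DecidableEq n] {G : Type*} [Group G]
    (U : G →* Matrix.unitaryGroup n ℂ) (g : G) (A : Matrix n n ℂ) : Matrix n n ℂ :=
  (U g : Matrix n n ℂ) * A * star (U g : Matrix n n ℂ)

/-- The mapping `κ_g` sending `Φ` to `m ↦ (U g)⁻¹ * Φ (g • m) * (U g)`
(note `(U g)⁻¹ = (U g)† = star (U g)`). -/
def kappa {n : Type*} [Fintype n] [DecidableEq n] {G : Type*} [Group G] {M : ℕ}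
    [MulAction G (Fin M)]
    (U : G →* Matrix.unitaryGroup n ℂ) (g : G)
    (Φ : Fin M → Matrix n n ℂ) : Fin M → Matrix n n ℂ :=
  fun m => star (U g : Matrix n n ℂ) * Φ (g • m) * (U g : Matrix n n ℂ)

/-!
The covariant measurement is the group average `Π = 𝔼 g, κ_g Φ`. Each `κ_g Φ` is a POVM
(unitary conjugation of a relabelled POVM), and since the trace is invariant under unitary
conjugation, covariance of `a`, `b` and `c` makes `κ_g Φ` feasible with the same objective
value as `Φ`. The feasible set is convex and the objective is linear, so the average keeps both
properties; averaging over the whole group makes it covariant, because `U g` conjugates `κ_h Φ`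
into `κ_{h g⁻¹} Φ` relabelled by `g`.
-/

open scoped BigOperators

lemma Fintype.sum_comp_smul {G α β : Type*} [Group G] [MulAction G α] [Fintype α]
    [AddCommMonoid β] (f : α → β) (g : G) : ∑ x, f (g • x) = ∑ x, f x :=
  Fintype.sum_equiv (MulAction.toPerm g) _ _ fun _ => rfl

lemma Finset.expect_fun_apply {ι α β : Type*} [AddCommMonoid β] [Module ℚ≥0 β]
    (s : Finset ι) (f : ι → α → β) (a : α) : (𝔼 i ∈ s, f i) a = 𝔼 i ∈ s, f i a := by
  simp only [Finset.expect, Pi.smul_apply, Finset.sum_apply]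

section PrimalObj

variable {n : Type*} [Fintype n] {M : ℕ}

lemma primalObj_add (d P Q : Fin M → Matrix n n ℂ) :
    primalObj d (P + Q) = primalObj d P + primalObj d Q := by
  simp only [primalObj, Pi.add_apply, Matrix.mul_add, trace_add, add_re, Finset.sum_add_distrib]

lemma primalObj_expect (d : Fin M → Matrix n n ℂ) {ι : Type*} (s : Finset ι)
    (Q : ι → Fin M → Matrix n n ℂ) :
    primalObj d (𝔼 i ∈ s, Q i) = 𝔼 i ∈ s, primalObj d (Q i) := by
  let φ := AddMonoidHom.mk' (primalObj d) (primalObj_add d)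
  change φ (_ • ∑ i ∈ s, Q i) = _ • ∑ i ∈ s, φ (Q i)
  rw [map_nnrat_smul, map_sum]

end PrimalObj

section Convexity

variable {n : Type*} [Fintype n] [DecidableEq n] {M : ℕ}

lemma IsPOVM.expect {ι : Type*} [Fintype ι] [Nonempty ι] {Q : ι → Fin M → Matrix n n ℂ}
    (hQ : ∀ i, IsPOVM (Q i)) : IsPOVM (𝔼 i, Q i) := by
  refine ⟨fun m => ?_, ?_⟩
  · open scoped MatrixOrder in
    simpa only [Finset.expect_fun_apply, ← Matrix.nonneg_iff_posSemidef] using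
      Finset.expect_nonneg fun i _ => ((hQ i).1 m).nonneg
  · simp only [Finset.expect_fun_apply]
    rw [← Finset.expect_sum_comm]
    simp only [fun i => (hQ i).2, Fintype.expect_const]

lemma Feasible.expect {J : ℕ} {a : Fin J → Fin M → Matrix n n ℂ} {b : Fin J → ℝ}
    {ι : Type*} [Fintype ι] [Nonempty ι] {Q : ι → Fin M → Matrix n n ℂ}
    (hQ : ∀ i, Feasible a b (Q i)) : Feasible a b (𝔼 i, Q i) :=
  ⟨IsPOVM.expect fun i => (hQ i).1, fun j => by
    change primalObj (a j) _ ≤ b j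
    rw [primalObj_expect]
    exact Finset.expect_le Finset.univ_nonempty fun i _ => (hQ i).2 j⟩

end Convexity

section Covariance

variable {n : Type*} [Fintype n] [DecidableEq n] {M : ℕ}
  {G : Type*} [Group G] [MulAction G (Fin M)] (U : G →* Matrix.unitaryGroup n ℂ)

lemma IsPOVM.kappa {Φ : Fin M → Matrix n n ℂ} (hΦ : IsPOVM Φ) (g : G) :
    IsPOVM (kappa U g Φ) := by
  refine ⟨fun m => (hΦ.1 (g • m)).conjTranspose_mul_mul_same _, ?_⟩
  simp only [_root_.kappa, ← Finset.mul_sum, ← Finset.sum_mul]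
  rw [Fintype.sum_comp_smul Φ g, hΦ.2, Matrix.mul_one, Unitary.coe_star_mul_self]

lemma primalObj_kappa {d d' : Fin M → Matrix n n ℂ} {g : G}
    (hd : ∀ m, conjAct U g (d m) = d' (g • m)) (Φ : Fin M → Matrix n n ℂ) :
    primalObj d (kappa U g Φ) = primalObj d' Φ := by
  have hterm : ∀ m, (d m * kappa U g Φ m).trace = (d' (g • m) * Φ (g • m)).trace := by
    intro m
    rw [← hd, _root_.kappa, conjAct, ← Matrix.mul_assoc, trace_mul_cycle, ← Matrix.mul_assoc]
  simp only [primalObj, hterm]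
  exact Fintype.sum_comp_smul (fun m => (d' m * Φ m).trace.re) g

lemma Feasible.kappa {J : ℕ} [MulAction G (Fin J)] {a : Fin J → Fin M → Matrix n n ℂ}
    {b : Fin J → ℝ} (hcova : ∀ (g : G) j m, conjAct U g (a j m) = a (g • j) (g • m))
    (hcovb : ∀ (g : G) j, b j = b (g • j)) {Φ : Fin M → Matrix n n ℂ} (hΦ : Feasible a b Φ)
    (g : G) : Feasible a b (kappa U g Φ) :=
  ⟨IsPOVM.kappa U hΦ.1 g, fun j => by
    change primalObj (a j) _ ≤ b j
    rw [primalObj_kappa U (hcova g j), hcovb g j]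
    exact hΦ.2 (g • j)⟩

lemma conjAct_kappa (g h : G) (Φ : Fin M → Matrix n n ℂ) (m : Fin M) :
    conjAct U g (kappa U h Φ m) = kappa U (h * g⁻¹) Φ (g • m) := by
  have hU : (U (h * g⁻¹) : Matrix n n ℂ) = U h * star (U g : Matrix n n ℂ) := by
    rw [map_mul, map_inv]; rfl
  simp only [conjAct, _root_.kappa, hU, star_mul, star_star, smul_smul, inv_mul_cancel_right,
    Matrix.mul_assoc]

def twirl [Fintype G] (Φ : Fin M → Matrix n n ℂ) : Fin M → Matrix n n ℂ :=
  𝔼 g : G, kappa U g Φ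

variable [Fintype G]

lemma primalObj_twirl {c : Fin M → Matrix n n ℂ}
    (hcovc : ∀ (g : G) m, conjAct U g (c m) = c (g • m)) (Φ : Fin M → Matrix n n ℂ) :
    primalObj c (twirl U Φ) = primalObj c Φ := by
  simp only [twirl, primalObj_expect, primalObj_kappa U (hcovc _), Fintype.expect_const]

lemma conjAct_twirl (Φ : Fin M → Matrix n n ℂ) (g : G) (m : Fin M) :
    conjAct U g (twirl U Φ m) = twirl U Φ (g • m) := by
  simp only [twirl, Finset.expect_fun_apply]
  calc conjAct U g (𝔼 h, kappa U h Φ m)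
      = 𝔼 h, conjAct U g (kappa U h Φ m) := by
        simp only [conjAct, Finset.mul_expect, Finset.expect_mul]
    _ = 𝔼 h, kappa U (h * g⁻¹) Φ (g • m) := by simp only [conjAct_kappa]
    _ = 𝔼 h, kappa U h Φ (g • m) :=
        Fintype.expect_equiv (Equiv.mulRight g⁻¹) _ _ fun _ => rfl

end Covariance

theorem exists_covariant_same_value_general
    {n : Type*} [Fintype n] [DecidableEq n]
    {G : Type*} [Group G] [Fintype G]
    {M J : ℕ} [MulAction G (Fin M)] [MulAction G (Fin J)]
    (U : G →* Matrix.unitaryGroup n ℂ)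
    (a : Fin J → Fin M → Matrix n n ℂ) (b : Fin J → ℝ)
    (hcova : ∀ (g : G) j m, conjAct U g (a j m) = a (g • j) (g • m))
    (hcovb : ∀ (g : G) j, b j = b (g • j))
    (c : Fin M → Matrix n n ℂ)
    (hcovc : ∀ (g : G) m, conjAct U g (c m) = c (g • m))
    (Φ : Fin M → Matrix n n ℂ) (hΦ : Feasible a b Φ) :
    ∃ P : Fin M → Matrix n n ℂ, Feasible a b P ∧
      primalObj c P = primalObj c Φ ∧
      ∀ (g : G) (m : Fin M), conjAct U g (P m) = P (g • m) :=
  ⟨twirl U Φ, Feasible.expect (Feasible.kappa U hcova hcovb hΦ), primalObj_twirl U hcovc Φ,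
    conjAct_twirl U Φ⟩

/-- Theorem 5, first part: for every feasible `Φ` there is a `G`-covariant feasible `Π`
with the same objective value. -/
theorem exists_covariant_same_value
    {n : Type*} [Fintype n] [DecidableEq n] [Nonempty n]
    {G : Type*} [Group G] [Fintype G]
    {M J : ℕ} [MulAction G (Fin M)] [MulAction G (Fin J)]
    (U : G →* Matrix.unitaryGroup n ℂ)
    (a : Fin J → Fin M → Matrix n n ℂ) (b : Fin J → ℝ)
    (ha : ∀ j m, (a j m).IsHermitian)
    (hne : ∃ P, Feasible a b P)
    (hcova : ∀ (g : G) j m, conjAct U g (a j m) = a (g • j) (g • m))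
    (hcovb : ∀ (g : G) j, b j = b (g • j))
    (c : Fin M → Matrix n n ℂ) (hc : ∀ m, (c m).IsHermitian)
    (hcovc : ∀ (g : G) m, conjAct U g (c m) = c (g • m))
    (Φ : Fin M → Matrix n n ℂ) (hΦ : Feasible a b Φ) :
    ∃ P : Fin M → Matrix n n ℂ, Feasible a b P ∧
      primalObj c P = primalObj c Φ ∧
      ∀ (g : G) (m : Fin M), conjAct U g (P m) = P (g • m) :=
  exists_covariant_same_value_general U a b hcova hcovb c hcovc Φ hΦ
end
end

section
/- Theorem 5, dual part: under the covariance assumptions, if the dual problem has an optimal solution (a dual feasible pair (Y, ν) with s(Y, ν) ≤ s(X', λ') for all dual feasible (X', λ')), then it has an optimal solution (X, λ) that is G-invariant: (U g) * X * (U g)† = X for all g ∈ G, and λ j = λ (g • j) for all g ∈ G and j ∈ Fin J. -/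
open Matrix Complex
open scoped ComplexOrder

noncomputable section

/-- Dual feasibility: `X` Hermitian, `λ ≥ 0`, and `X - z m λ` positive semidefinite. -/
def DualFeasible {n : Type*} [Fintype n] {M J : ℕ}
    (c : Fin M → Matrix n n ℂ) (a : Fin J → Fin M → Matrix n n ℂ)
    (X : Matrix n n ℂ) (lam : Fin J → ℝ) : Prop :=
  X.IsHermitian ∧ (∀ j, 0 ≤ lam j) ∧ ∀ m, (X - zOp c a lam m).PosSemidef


/-! The dual feasible set is convex, and by covariance it is stable under
`(X, λ) ↦ (g · X, λ ∘ (g⁻¹ • ·))`, which also preserves the objective `s`. Averaging an optimal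
pair over its `G`-orbit therefore gives a feasible pair with the same objective value, and the
average is `G`-invariant because left multiplication permutes `G`. -/

section ConjAct

variable {n : Type*} [Fintype n] [DecidableEq n] {G : Type*} [Group G]
  (U : G →* Matrix.unitaryGroup n ℂ)

lemma conjAct_isHermitian (g : G) {A : Matrix n n ℂ} (hA : A.IsHermitian) :
    (conjAct U g A).IsHermitian := by
  simpa [conjAct, Matrix.star_eq_conjTranspose] using
    isHermitian_mul_mul_conjTranspose (U g : Matrix n n ℂ) hA

lemma conjAct_posSemidef (g : G) {A : Matrix n n ℂ} (hA : A.PosSemidef) :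
    (conjAct U g A).PosSemidef := by
  simpa [conjAct, Matrix.star_eq_conjTranspose] using
    hA.mul_mul_conjTranspose_same (U g : Matrix n n ℂ)

lemma trace_conjAct (g : G) (A : Matrix n n ℂ) : (conjAct U g A).trace = A.trace := by
  rw [conjAct, trace_mul_cycle, UnitaryGroup.star_mul_self, Matrix.one_mul]

lemma conjAct_sub (g : G) (A B : Matrix n n ℂ) :
    conjAct U g (A - B) = conjAct U g A - conjAct U g B := by
  simp [conjAct, Matrix.sub_mul, Matrix.mul_sub]

lemma conjAct_smul {R : Type*} [Monoid R] [DistribMulAction R ℂ] [IsScalarTower R ℂ ℂ]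
    [SMulCommClass R ℂ ℂ] (g : G) (r : R) (A : Matrix n n ℂ) :
    conjAct U g (r • A) = r • conjAct U g A := by
  simp [conjAct, Matrix.smul_mul, Matrix.mul_smul]

lemma conjAct_sum (g : G) {ι : Type*} (s : Finset ι) (A : ι → Matrix n n ℂ) :
    conjAct U g (∑ i ∈ s, A i) = ∑ i ∈ s, conjAct U g (A i) := by
  simp [conjAct, Finset.sum_mul, Finset.mul_sum]

lemma conjAct_conjAct (g h : G) (A : Matrix n n ℂ) :
    conjAct U g (conjAct U h A) = conjAct U (g * h) A := by
  simp only [conjAct, map_mul, Submonoid.coe_mul, star_mul, Matrix.mul_assoc]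

end ConjAct

section ConvexCombination

variable {n : Type*} {M J : ℕ}
  (c : Fin M → Matrix n n ℂ) (a : Fin J → Fin M → Matrix n n ℂ) (b : Fin J → ℝ)
  {ι : Type*} (s : Finset ι) {w : ι → ℝ}

lemma zOp_sum_smul (hw : ∑ i ∈ s, w i = 1) (lam : ι → Fin J → ℝ) (m : Fin M) :
    zOp c a (∑ i ∈ s, w i • lam i) m = ∑ i ∈ s, w i • zOp c a (lam i) m := by
  simp only [zOp, Finset.smul_sum, smul_sub, Finset.sum_sub_distrib, ← Finset.sum_smul, hw,
    one_smul, Finset.sum_apply, Pi.smul_apply, smul_eq_mul, Complex.ofReal_sum,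
    Complex.ofReal_mul]
  rw [Finset.sum_comm]
  simp only [Finset.sum_smul, mul_smul, Complex.coe_smul]

lemma dualObj_sum_smul [Fintype n] (X : ι → Matrix n n ℂ) (lam : ι → Fin J → ℝ) :
    dualObj b (∑ i ∈ s, w i • X i) (∑ i ∈ s, w i • lam i) =
      ∑ i ∈ s, w i * dualObj b (X i) (lam i) := by
  simp only [dualObj, trace_sum, trace_smul, Complex.re_sum, Complex.smul_re, smul_eq_mul,
    Finset.sum_apply, Pi.smul_apply, Finset.sum_mul, mul_add, Finset.sum_add_distrib,
    Finset.mul_sum, mul_assoc]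
  rw [Finset.sum_comm]

lemma DualFeasible.sum_smul [Fintype n] (hw₀ : ∀ i ∈ s, 0 ≤ w i) (hw : ∑ i ∈ s, w i = 1)
    {X : ι → Matrix n n ℂ} {lam : ι → Fin J → ℝ}
    (h : ∀ i ∈ s, DualFeasible c a (X i) (lam i)) :
    DualFeasible c a (∑ i ∈ s, w i • X i) (∑ i ∈ s, w i • lam i) := by
  refine ⟨isSelfAdjoint_sum s fun i hi => (h i hi).1.smul (.all (w i)), fun j => ?_,
    fun m => ?_⟩
  · simp only [Finset.sum_apply, Pi.smul_apply, smul_eq_mul]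
    exact Finset.sum_nonneg fun i hi => mul_nonneg (hw₀ i hi) ((h i hi).2.1 j)
  · rw [zOp_sum_smul c a s hw, ← Finset.sum_sub_distrib]
    exact posSemidef_sum s fun i hi => by
      rw [← smul_sub]; exact ((h i hi).2.2 m).smul (hw₀ i hi)

end ConvexCombination

section Covariance

variable {n : Type*} [Fintype n] [DecidableEq n] {G : Type*} [Group G]
  {M J : ℕ} [MulAction G (Fin M)] [MulAction G (Fin J)] {U : G →* Matrix.unitaryGroup n ℂ}
  {c : Fin M → Matrix n n ℂ} {a : Fin J → Fin M → Matrix n n ℂ}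

lemma conjAct_zOp (hcova : ∀ (g : G) j m, conjAct U g (a j m) = a (g • j) (g • m))
    (hcovc : ∀ (g : G) m, conjAct U g (c m) = c (g • m)) (g : G) (lam : Fin J → ℝ)
    (m : Fin M) :
    conjAct U g (zOp c a lam m) = zOp c a (fun j => lam (g⁻¹ • j)) (g • m) := by
  simp only [zOp, conjAct_sub, conjAct_sum, conjAct_smul, hcova, hcovc]
  congr 1
  exact Fintype.sum_equiv (MulAction.toPerm g) _ _ fun j => by simp

lemma dualFeasible_conjAct (hcova : ∀ (g : G) j m, conjAct U g (a j m) = a (g • j) (g • m))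
    (hcovc : ∀ (g : G) m, conjAct U g (c m) = c (g • m)) {X : Matrix n n ℂ} {lam : Fin J → ℝ}
    (h : DualFeasible c a X lam) (g : G) :
    DualFeasible c a (conjAct U g X) (fun j => lam (g⁻¹ • j)) := by
  refine ⟨conjAct_isHermitian U g h.1, fun j => h.2.1 _, fun m => ?_⟩
  simpa [conjAct_zOp hcova hcovc, conjAct_sub] using conjAct_posSemidef U g (h.2.2 (g⁻¹ • m))

lemma dualObj_conjAct {b : Fin J → ℝ} (hcovb : ∀ (g : G) j, b j = b (g • j)) (g : G)
    (X : Matrix n n ℂ) (lam : Fin J → ℝ) :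
    dualObj b (conjAct U g X) (fun j => lam (g⁻¹ • j)) = dualObj b X lam := by
  rw [dualObj, dualObj, trace_conjAct]
  congr 1
  exact Fintype.sum_equiv (MulAction.toPerm g⁻¹) _ _ fun j => by simp [← hcovb]

end Covariance

theorem exists_invariant_dual_optimal_general
    {n : Type*} [Fintype n] [DecidableEq n]
    {G : Type*} [Group G] [Fintype G]
    {M J : ℕ} [MulAction G (Fin M)] [MulAction G (Fin J)]
    (U : G →* Matrix.unitaryGroup n ℂ)
    (c : Fin M → Matrix n n ℂ) (a : Fin J → Fin M → Matrix n n ℂ) (b : Fin J → ℝ)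
    (hcova : ∀ (g : G) j m, conjAct U g (a j m) = a (g • j) (g • m))
    (hcovb : ∀ (g : G) j, b j = b (g • j))
    (hcovc : ∀ (g : G) m, conjAct U g (c m) = c (g • m))
    (hopt : ∃ Y ν, DualFeasible c a Y ν ∧
      ∀ X' lam', DualFeasible c a X' lam' → dualObj b Y ν ≤ dualObj b X' lam') :
    ∃ (X : Matrix n n ℂ) (lam : Fin J → ℝ),
      DualFeasible c a X lam ∧
      (∀ X' lam', DualFeasible c a X' lam' → dualObj b X lam ≤ dualObj b X' lam') ∧
      (∀ g : G, conjAct U g X = X) ∧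
      (∀ (g : G) (j : Fin J), lam j = lam (g • j)) := by
  obtain ⟨Y, ν, hY, hYmin⟩ := hopt
  set w : G → ℝ := fun _ => (Fintype.card G : ℝ)⁻¹
  have hw₀ : ∀ g ∈ Finset.univ, 0 ≤ w g := fun _ _ => by positivity
  have hw : ∑ g, w g = 1 := by simp [w]
  refine ⟨∑ g, w g • conjAct U g Y, ∑ g, w g • fun j => ν (g⁻¹ • j),
    DualFeasible.sum_smul c a _ hw₀ hw fun g _ => dualFeasible_conjAct hcova hcovc hY g,
    fun X' lam' h' => ?_, fun h => ?_, fun h j => ?_⟩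
  · simp only [dualObj_sum_smul, dualObj_conjAct hcovb, ← Finset.sum_mul, hw, one_mul]
    exact hYmin X' lam' h'
  · simp only [conjAct_sum, conjAct_smul, conjAct_conjAct]
    exact Fintype.sum_equiv (Equiv.mulLeft h) _ _ fun _ => rfl
  · simp only [Finset.sum_apply, Pi.smul_apply]
    exact Fintype.sum_equiv (Equiv.mulLeft h) _ _ fun g => by simp [w, mul_smul]

/-- Theorem 5, dual part: if the dual problem has an optimal solution, it has a
`G`-invariant optimal solution. -/
theorem exists_invariant_dual_optimal
    {n : Type*} [Fintype n] [DecidableEq n] [Nonempty n]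
    {G : Type*} [Group G] [Fintype G]
    {M J : ℕ} [MulAction G (Fin M)] [MulAction G (Fin J)]
    (U : G →* Matrix.unitaryGroup n ℂ)
    (c : Fin M → Matrix n n ℂ) (a : Fin J → Fin M → Matrix n n ℂ) (b : Fin J → ℝ)
    (hc : ∀ m, (c m).IsHermitian) (ha : ∀ j m, (a j m).IsHermitian)
    (hcova : ∀ (g : G) j m, conjAct U g (a j m) = a (g • j) (g • m))
    (hcovb : ∀ (g : G) j, b j = b (g • j))
    (hcovc : ∀ (g : G) m, conjAct U g (c m) = c (g • m))
    (hopt : ∃ Y ν, DualFeasible c a Y ν ∧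
      ∀ X' lam', DualFeasible c a X' lam' → dualObj b Y ν ≤ dualObj b X' lam') :
    ∃ (X : Matrix n n ℂ) (lam : Fin J → ℝ),
      DualFeasible c a X lam ∧
      (∀ X' lam', DualFeasible c a X' lam' → dualObj b X lam ≤ dualObj b X' lam') ∧
      (∀ g : G, conjAct U g X = X) ∧
      (∀ (g : G) (j : Fin J), lam j = lam (g • j)) :=
  exists_invariant_dual_optimal_general U c a b hcova hcovb hcovc hopt
end
end
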